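/- Let τ and α be real numbers with 0 < τ < π, 0 < τ − α/2 < π, and 0 < τ + α/2 < π, and for real ℏ near 0 define W(τ, α, ℏ) = √( sin(τ + α/2 + ℏ/2)·sin(τ − α/2 + ℏ/2) / (sin(τ)·sin(τ + ℏ)) ). Then lim_{ℏ→0} (W(τ, α, ℏ) − W(τ + ℏ/2, α, 0))/ℏ = 0; equivalently, W(τ, α, ℏ) = W(τ + ℏ/2, α, 0) + o(ℏ). -/

import Mathlib

/-!
Both `W(τ, α, ℏ)` and `W(τ + ℏ/2, α, 0)` are `√(N(ℏ) / D(ℏ))` with the same numerator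
`N(ℏ) = sin(τ + α/2 + ℏ/2) sin(τ − α/2 + ℏ/2)` and denominators `sin τ sin(τ + ℏ)` resp.
`sin²(τ + ℏ/2)`. These denominators agree to first order at `ℏ = 0` (value `sin² τ`,
derivative `sin τ cos τ`), and `N(0) / sin² τ > 0`, so `√` is differentiable there. Hence the
two sides have the same derivative at `0`, and their difference is `o(ℏ)`.
-/

open Real Filter

/-- The function `W(τ, α, ℏ)` appearing in the ψ-symbol of the curve `Dₑ` when
the edge `e` joins a trivalent vertex to itself. -/
noncomputable def W9 (τ α h : ℝ) : ℝ :=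
  Real.sqrt (Real.sin (τ + α / 2 + h / 2) * Real.sin (τ - α / 2 + h / 2)
    / (Real.sin τ * Real.sin (τ + h)))

open Topology

theorem tendsto_sub_div_of_hasDerivAt_of_eq {𝕜 : Type*} [NontriviallyNormedField 𝕜]
    {f g : 𝕜 → 𝕜} {f' x : 𝕜} (hf : HasDerivAt f f' x) (hg : HasDerivAt g f' x)
    (hfg : f x = g x) :
    Tendsto (fun h => (f (x + h) - g (x + h)) / h) (𝓝[≠] 0) (𝓝 0) := by
  have hsub : HasDerivAt (fun y => f y - g y) 0 x := by simpa using hf.fun_sub hg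
  simpa [hfg, div_eq_inv_mul] using hasDerivAt_iff_tendsto_slope_zero.mp hsub

theorem tendsto_sqrt_div_sub_sqrt_div {N D₁ D₂ : ℝ → ℝ} {N' D' x : ℝ}
    (hN : HasDerivAt N N' x) (hD₁ : HasDerivAt D₁ D' x) (hD₂ : HasDerivAt D₂ D' x)
    (hD : D₁ x = D₂ x) (hDx : D₁ x ≠ 0) (hNx : N x ≠ 0) :
    Tendsto (fun h => (√(N (x + h) / D₁ (x + h)) - √(N (x + h) / D₂ (x + h))) / h)
      (𝓝[≠] 0) (𝓝 0) := by
  have h₁ := (hN.fun_div hD₁ hDx).sqrt (div_ne_zero hNx hDx)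
  rw [hD] at hDx h₁
  exact tendsto_sub_div_of_hasDerivAt_of_eq (f := fun y => √(N y / D₁ y))
    (g := fun y => √(N y / D₂ y)) h₁ ((hN.fun_div hD₂ hDx).sqrt (div_ne_zero hNx hDx)) (by rw [hD])

theorem hasDerivAt_sin_mul_sin_add (τ : ℝ) :
    HasDerivAt (fun h => sin τ * sin (τ + h)) (sin τ * cos τ) 0 := by
  simpa using (((hasDerivAt_id (0 : ℝ)).const_add τ).sin).const_mul (sin τ)

theorem hasDerivAt_sin_add_half_sq (τ : ℝ) :
    HasDerivAt (fun h => sin (τ + h / 2) ^ 2) (sin τ * cos τ) 0 := by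
  refine ((((hasDerivAt_id' (0 : ℝ)).div_const 2).const_add τ).sin.fun_pow 2).congr_deriv ?_
  norm_num
  ring

theorem W9_add_half_zero (τ α h : ℝ) :
    W9 (τ + h / 2) α 0 =
      √(sin (τ + α / 2 + h / 2) * sin (τ - α / 2 + h / 2) / sin (τ + h / 2) ^ 2) := by
  unfold W9
  ring_nf

/-- `W(τ, α, ℏ) = W(τ + ℏ/2, α, 0) + o(ℏ)`, i.e.
`(W(τ, α, ℏ) − W(τ + ℏ/2, α, 0))/ℏ → 0` as `ℏ → 0`. -/
theorem W_shift_asymptotic (τ α : ℝ)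
    (h1 : 0 < τ) (h2 : τ < Real.pi)
    (h3 : 0 < τ - α / 2) (h4 : τ - α / 2 < Real.pi)
    (h5 : 0 < τ + α / 2) (h6 : τ + α / 2 < Real.pi) :
    Tendsto (fun h : ℝ => (W9 τ α h - W9 (τ + h / 2) α 0) / h)
      (nhdsWithin 0 {0}ᶜ) (nhds 0) := by
  have hsin : sin τ ≠ 0 := (sin_pos_of_pos_of_lt_pi h1 h2).ne'
  have hN0 : sin (τ + α / 2 + 0 / 2) * sin (τ - α / 2 + 0 / 2) ≠ 0 := by
    simpa using mul_ne_zero (sin_pos_of_pos_of_lt_pi h5 h6).ne' (sin_pos_of_pos_of_lt_pi h3 h4).ne'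
  have hN : HasDerivAt (fun h => sin (τ + α / 2 + h / 2) * sin (τ - α / 2 + h / 2))
      _ 0 := (by fun_prop : DifferentiableAt ℝ _ (0 : ℝ)).hasDerivAt
  simp_rw [W9_add_half_zero]
  unfold W9
  simpa using tendsto_sqrt_div_sub_sqrt_div hN (hasDerivAt_sin_mul_sin_add τ)
    (hasDerivAt_sin_add_half_sq τ) (by simp [sq]) (by simp [hsin]) hN0
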